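/- arXiv:2310.03387 — 7 statements merged into one kernel-verified Lean document; each statement's English description precedes it below -/
import Mathlib

section
/- Let Λ be a graph of rank n and let W = {W^F}_{F⊆[n]} be an invariant family of vertex subsets. Then for every F ⊆ [n] and every m ∈ ℕⁿ one has W^{F∖supp m} ⊆ (Λ^m)⁻¹(W^F); equivalently, every path γ of degree m with r(γ) ∈ W^{F∖supp m} satisfies s(γ) ∈ W^F. (Higher-rank graph instance of Lemma 4.3 of the paper, which is the key well-definedness lemma for the extended product system and the extended graph Γ_W.) -/
open CategoryTheory

/-- A graph of rank `n` (higher-rank graph): a countable small category equipped with a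
degree functor `d` into `ℕⁿ` satisfying the unique factorization property. -/
structure RankGraph (n : ℕ) where
  /-- the vertices (objects) -/
  Obj : Type
  [cat : SmallCategory Obj]
  countable : Countable ((u : Obj) × (w : Obj) × (u ⟶ w))
  /-- the degree functor on paths (morphisms) -/
  d : ∀ {u w : Obj}, (u ⟶ w) → (Fin n → ℕ)
  d_id : ∀ v : Obj, d (𝟙 v) = 0
  d_comp : ∀ {u v w : Obj} (f : u ⟶ v) (g : v ⟶ w), d (f ≫ g) = d f + d g
  /-- unique factorization: if `d γ = m + k` then `γ` factors uniquely as `γ = β ≫ α`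
  with `d α = m` (the segment at the range side) and `d β = k`. -/
  factor : ∀ {u w : Obj} (γ : u ⟶ w) (m k : Fin n → ℕ), d γ = m + k →
      ∃! x : (v : Obj) × (u ⟶ v) × (v ⟶ w),
        d x.2.2 = m ∧ d x.2.1 = k ∧ x.2.1 ≫ x.2.2 = γ

attribute [instance] RankGraph.cat

namespace RankGraph

variable {n : ℕ}

/-- `(Γ^m)⁻¹(S)`: the set of vertices `v` such that every path of degree `m`
with range `v` has source in `S`. (A path `γ : u ⟶ v` has source `u` and range `v`.) -/
def pre (Γ : RankGraph n) (m : Fin n → ℕ) (S : Set Γ.Obj) : Set Γ.Obj :=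
  { v | ∀ (u : Γ.Obj) (γ : u ⟶ v), Γ.d γ = m → u ∈ S }

/-- the characteristic vector `1_F ∈ ℕⁿ` of a subset `F ⊆ [n]` -/
def chi (F : Finset (Fin n)) : Fin n → ℕ := fun i => if i ∈ F then 1 else 0

/-- the support of `m ∈ ℕⁿ`: the set of indices of nonzero coordinates -/
def supp (m : Fin n → ℕ) : Finset (Fin n) := Finset.univ.filter fun i => m i ≠ 0

end RankGraph

/-- For an invariant family `W` of vertex subsets of a rank-`n` graph, every path `γ` of
degree `m` whose range lies in `W^{F ∖ supp m}` has source in `W^F`; equivalently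
`W^{F ∖ supp m} ⊆ (Γ^m)⁻¹(W^F)`. -/
theorem rankGraph_invariantFamily_pre {n : ℕ} (Γ : RankGraph n)
    (W : Finset (Fin n) → Set Γ.Obj)
    (hW : ∀ (G : Finset (Fin n)) (i : Fin n), i ∉ G →
      W G = Γ.pre (RankGraph.chi {i}) (W G ∩ W (insert i G)))
    (F : Finset (Fin n)) (m : Fin n → ℕ) :
    W (F \ RankGraph.supp m) ⊆ Γ.pre m (W F) := by
  classical
  suffices h : ∀ N (m : Fin n → ℕ), Finset.univ.sum m = N →
      W (F \ RankGraph.supp m) ⊆ Γ.pre m (W F) from h _ m rfl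
  intro N
  induction N using Nat.strong_induction_on with
  | _ N ih =>
    intro m hm v hv u γ hγ
    by_cases h0 : m = 0
    · subst h0
      obtain ⟨x, hx, hxu⟩ := Γ.factor γ 0 0 (by simpa using hγ)
      have h1 := hxu ⟨v, γ, 𝟙 v⟩ ⟨by simp [Γ.d_id], hγ, by simp⟩
      have h2 := hxu ⟨u, 𝟙 u, γ⟩ ⟨hγ, by simp [Γ.d_id], by simp⟩
      have huv : u = v := congrArg Sigma.fst (h2.trans h1.symm)
      subst huv
      simpa [RankGraph.supp] using hv
    · obtain ⟨i, hi⟩ : ∃ i, m i ≠ 0 := by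
        by_contra h; push_neg at h; exact h0 (funext fun i => h i)
      set m' : Fin n → ℕ := fun j => if j = i then m i - 1 else m j with hm'
      have hsum : m = RankGraph.chi {i} + m' := by
        funext j
        by_cases hj : j = i
        · subst hj; simp [RankGraph.chi, hm']; omega
        · simp [RankGraph.chi, hm', hj]
      obtain ⟨⟨v', β, α⟩, ⟨hα, hβ, hcomp⟩, -⟩ :=
        Γ.factor γ (RankGraph.chi {i}) m' (hγ.trans hsum)
      have hiG : i ∉ F \ RankGraph.supp m := by
        simp [RankGraph.supp, hi]
      have hv' : v' ∈ W (F \ RankGraph.supp m) ∩ W (insert i (F \ RankGraph.supp m)) := by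
        have h' := hW (F \ RankGraph.supp m) i hiG
        rw [h'] at hv
        exact hv v' α hα
      have key : v' ∈ W (F \ RankGraph.supp m') := by
        by_cases hcase : i ∈ F ∧ m' i = 0
        · have heq : F \ RankGraph.supp m' = insert i (F \ RankGraph.supp m) := by
            ext j
            by_cases hj : j = i
            · subst hj; simp [RankGraph.supp, hcase.1, hcase.2]
            · simp [RankGraph.supp, hm', hj]
          rw [heq]; exact hv'.2
        · have heq : F \ RankGraph.supp m' = F \ RankGraph.supp m := by
            ext j
            by_cases hj : j = i
            · subst hj; simp [RankGraph.supp, hi]; tauto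
            · simp [RankGraph.supp, hm', hj]
          rw [heq]; exact hv'.1
      have hlt : Finset.univ.sum m' < N := by
        have : Finset.univ.sum m = 1 + Finset.univ.sum m' := by
          rw [hsum]
          show (∑ j, (RankGraph.chi {i} j + m' j)) = _
          rw [Finset.sum_add_distrib]
          simp [RankGraph.chi]
        omega
      exact ih _ (by omega) m' rfl key u β hβ
end

section
/- Let Λ be a graph of rank n, let V = {V^F}_{F⊆[n]} be a T-family of vertex subsets, and let F ⊆ H ⊆ [n]. Then ⋂_{G : F⊆G⊆H} (Λ^{1_H − 1_G})⁻¹(V^G) = V^F. (Higher-rank graph instance of Lemma 4.2(1) of the paper.) -/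
open CategoryTheory

namespace RankGraphAux

open RankGraph

variable {n : ℕ}

lemma deg_zero_eq (Γ : RankGraph n) {u v : Γ.Obj} (γ : u ⟶ v) (h : Γ.d γ = 0) :
    u = v := by
  have h' : Γ.d γ = (0 : Fin n → ℕ) + 0 := by simpa using h
  obtain ⟨x, hx, hu⟩ := Γ.factor γ 0 0 h'
  have h1 : (⟨v, γ, 𝟙 v⟩ : (w : Γ.Obj) × (u ⟶ w) × (w ⟶ v)) = x := by
    refine hu _ ⟨Γ.d_id v, h, ?_⟩
    simp
  have h2 : (⟨u, 𝟙 u, γ⟩ : (w : Γ.Obj) × (u ⟶ w) × (w ⟶ v)) = x := by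
    refine hu _ ⟨h, Γ.d_id u, ?_⟩
    simp
  have := h1.trans h2.symm
  exact (congrArg Sigma.fst this).symm

lemma pre_zero (Γ : RankGraph n) (S : Set Γ.Obj) : Γ.pre 0 S = S := by
  ext v
  constructor
  · intro h
    exact h v (𝟙 v) (Γ.d_id v)
  · intro hv u γ hγ
    rcases deg_zero_eq Γ γ hγ
    exact hv

lemma pre_add (Γ : RankGraph n) (m k : Fin n → ℕ) (S : Set Γ.Obj) :
    Γ.pre (m + k) S = Γ.pre m (Γ.pre k S) := by
  ext v
  constructor
  · intro h w α hα u β hβ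
    refine h u (β ≫ α) ?_
    rw [Γ.d_comp, hα, hβ, add_comm]
  · intro h u γ hγ
    obtain ⟨⟨w, f, g⟩, ⟨hg, hf, hcomp⟩, -⟩ := Γ.factor γ m k hγ
    exact h w g hg u f hf

lemma chi_sub_self (F : Finset (Fin n)) : chi F - chi F = (0 : Fin n → ℕ) := by
  funext j
  simp [chi]

lemma chi_split {G H : Finset (Fin n)} {i : Fin n} (hiH : i ∈ H) (hiG : i ∉ G)
    (_hGH : G ⊆ H) :
    chi H - chi G = chi {i} + (chi (H.erase i) - chi G) := by
  funext j
  simp only [chi, Pi.sub_apply, Pi.add_apply, Finset.mem_erase, Finset.mem_singleton]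
  by_cases hj : j = i
  · subst hj
    simp [hiH, hiG]
  · simp [hj]

lemma main_aux (Γ : RankGraph n) (V : Finset (Fin n) → Set Γ.Obj)
    (hV : ∀ (F : Finset (Fin n)) (i : Fin n), i ∉ F →
      Γ.pre (RankGraph.chi {i}) (V F) ∩ V (insert i F) = V F) :
    ∀ (k : ℕ) (F H : Finset (Fin n)), F ⊆ H → (H \ F).card = k →
      (⋂ (G : Finset (Fin n)) (_ : F ⊆ G) (_ : G ⊆ H),
        Γ.pre (RankGraph.chi H - RankGraph.chi G) (V G)) = V F := by
  intro k
  induction k with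
  | zero =>
    intro F H hFH hcard
    have hHF : H = F := by
      have := Finset.card_eq_zero.mp hcard
      have hsub : H ⊆ F := fun x hx => by
        by_contra hxF
        exact absurd (Finset.mem_sdiff.mpr ⟨hx, hxF⟩) (by simp [this])
      exact Finset.Subset.antisymm hsub hFH
    subst hHF
    ext v
    simp only [Set.mem_iInter]
    constructor
    · intro h
      have := h H (le_refl H) (le_refl H)
      rwa [chi_sub_self, pre_zero] at this
    · intro hv G hG1 hG2
      have : G = H := Finset.Subset.antisymm hG2 hG1
      subst this
      rwa [chi_sub_self, pre_zero]
  | succ k ih =>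
    intro F H hFH hcard
    have hne : (H \ F).Nonempty := by
      rw [← Finset.card_pos, hcard]; omega
    obtain ⟨i, hi⟩ := hne
    rw [Finset.mem_sdiff] at hi
    obtain ⟨hiH, hiF⟩ := hi
    set F' := insert i F with hF'
    set H' := H.erase i with hH'
    have hF'H : F' ⊆ H := Finset.insert_subset hiH hFH
    have hFH' : F ⊆ H' := fun x hx => Finset.mem_erase.mpr ⟨fun h => hiF (h ▸ hx), hFH hx⟩
    have hcard1 : (H \ F').card = k := by
      have : H \ F' = (H \ F).erase i := by
        ext x
        simp only [Finset.mem_sdiff, Finset.mem_erase, hF', Finset.mem_insert]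
        tauto
      rw [this, Finset.card_erase_of_mem (Finset.mem_sdiff.mpr ⟨hiH, hiF⟩), hcard]
      omega
    have hcard2 : (H' \ F).card = k := by
      have : H' \ F = (H \ F).erase i := by
        ext x
        simp only [Finset.mem_sdiff, Finset.mem_erase, hH']
        tauto
      rw [this, Finset.card_erase_of_mem (Finset.mem_sdiff.mpr ⟨hiH, hiF⟩), hcard]
      omega
    have IH1 := ih F' H hF'H hcard1
    have IH2 := ih F H' hFH' hcard2
    have key := hV F i hiF
    ext v
    simp only [Set.mem_iInter]
    constructor
    · intro h
      rw [← key]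
      constructor
      · -- v ∈ pre χ{i} (V F)
        intro u γ hγ
        rw [← IH2]
        simp only [Set.mem_iInter]
        intro G hG1 hG2
        have hiG : i ∉ G := fun hx => (Finset.mem_erase.mp (hG2 hx)).1 rfl
        have hv := h G hG1 (hG2.trans (Finset.erase_subset i H))
        rw [chi_split hiH hiG (hG2.trans (Finset.erase_subset i H)), pre_add] at hv
        exact hv u γ hγ
      · -- v ∈ V F'
        rw [← IH1]
        simp only [Set.mem_iInter]
        intro G hG1 hG2
        exact h G ((Finset.subset_insert i F).trans hG1) hG2
    · intro hv G hG1 hG2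
      rw [← key] at hv
      obtain ⟨h1, h2⟩ := hv
      by_cases hiG : i ∈ G
      · rw [← IH1] at h2
        simp only [Set.mem_iInter] at h2
        exact h2 G (Finset.insert_subset hiG hG1) hG2
      · have hGH' : G ⊆ H' := fun x hx =>
          Finset.mem_erase.mpr ⟨fun h => hiG (h ▸ hx), hG2 hx⟩
        rw [chi_split hiH hiG hG2, pre_add]
        intro u γ hγ
        have hu := h1 u γ hγ
        rw [← IH2] at hu
        simp only [Set.mem_iInter] at hu
        exact hu G hG1 hGH'

end RankGraphAux

/-- For a T-family `V` of vertex subsets and `F ⊆ H ⊆ [n]`: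
`⋂_{G : F ⊆ G ⊆ H} (Γ^{1_H − 1_G})⁻¹(V^G) = V^F`. -/
theorem rankGraph_TFamily_iInter {n : ℕ} (Γ : RankGraph n)
    (V : Finset (Fin n) → Set Γ.Obj)
    (hV : ∀ (F : Finset (Fin n)) (i : Fin n), i ∉ F →
      Γ.pre (RankGraph.chi {i}) (V F) ∩ V (insert i F) = V F)
    (F H : Finset (Fin n)) (hFH : F ⊆ H) :
    ⋂ (G : Finset (Fin n)) (_ : F ⊆ G) (_ : G ⊆ H),
        Γ.pre (RankGraph.chi H - RankGraph.chi G) (V G) = V F := by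
  exact RankGraphAux.main_aux Γ V hV (H \ F).card F H hFH rfl
end

section
/- Let Λ be a graph of rank n, let W = {W^F}_{F⊆[n]} be an invariant family of vertex subsets, and let F ⊆ H ⊆ [n]. Then (Λ^{1_H − 1_F})⁻¹( ⋂_{G : F⊆G⊆H} W^G ) = W^F. (Higher-rank graph instance of Lemma 4.2(2) of the paper.) -/
open CategoryTheory

namespace RankGraph

variable {n : ℕ} (Γ : RankGraph n)

lemma eq_of_d_eq_zero {u v : Γ.Obj} (γ : u ⟶ v) (h : Γ.d γ = 0) : u = v := by
  obtain ⟨x, hx, hu⟩ := Γ.factor γ 0 0 (by simpa using h)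
  have h1 := hu ⟨u, 𝟙 u, γ⟩ ⟨h, Γ.d_id u, Category.id_comp γ⟩
  have h2 := hu ⟨v, γ, 𝟙 v⟩ ⟨Γ.d_id v, h, Category.comp_id γ⟩
  exact congrArg Sigma.fst (h1.trans h2.symm)

lemma pre_zero (S : Set Γ.Obj) : Γ.pre 0 S = S := by
  ext v
  constructor
  · intro h; exact h v (𝟙 v) (Γ.d_id v)
  · intro hv u γ hγ
    obtain rfl := Γ.eq_of_d_eq_zero γ hγ
    exact hv

lemma pre_add (m k : Fin n → ℕ) (S : Set Γ.Obj) :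
    Γ.pre (m + k) S = Γ.pre m (Γ.pre k S) := by
  ext v
  constructor
  · intro h w α hα u β hβ
    exact h u (β ≫ α) (by rw [Γ.d_comp, hα, hβ, add_comm])
  · intro h u γ hγ
    obtain ⟨⟨w, β, α⟩, ⟨hm, hk, hc⟩, -⟩ := Γ.factor γ m k hγ
    exact h w α hm u β hk

lemma pre_inter (m : Fin n → ℕ) (S T : Set Γ.Obj) :
    Γ.pre m (S ∩ T) = Γ.pre m S ∩ Γ.pre m T := by
  ext v
  simp only [pre, Set.mem_setOf_eq, Set.mem_inter_iff]
  exact ⟨fun h => ⟨fun u γ hγ => (h u γ hγ).1, fun u γ hγ => (h u γ hγ).2⟩,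
         fun h u γ hγ => ⟨h.1 u γ hγ, h.2 u γ hγ⟩⟩

lemma chi_sub_self (F : Finset (Fin n)) : chi (n := n) F - chi F = 0 := by
  funext j; simp [chi]

lemma chi_sub_eq (F H : Finset (Fin n)) (i : Fin n) (hiH : i ∈ H) (hiF : i ∉ F) :
    chi (n := n) H - chi F = chi {i} + (chi H - chi (insert i F)) := by
  funext j
  simp only [chi, Pi.sub_apply, Pi.add_apply, Finset.mem_insert, Finset.mem_singleton]
  by_cases hj : j = i
  · subst hj; simp [hiF, hiH]
  · simp [hj]

lemma chi_sub_insert_eq_erase (F H : Finset (Fin n)) (i : Fin n) (hiF : i ∉ F) (hiH : i ∈ H) :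
    chi (n := n) H - chi (insert i F) = chi (H.erase i) - chi F := by
  funext j
  by_cases hj : j = i <;>
    simp [chi, hj, hiF, hiH, Finset.mem_erase, Finset.mem_insert]

lemma iInter_split (W : Finset (Fin n) → Set Γ.Obj) (F H : Finset (Fin n)) (i : Fin n)
    (hiH : i ∈ H) (hiF : i ∉ F) :
    (⋂ (G : Finset (Fin n)) (_ : F ⊆ G) (_ : G ⊆ H), W G)
      = (⋂ (G : Finset (Fin n)) (_ : insert i F ⊆ G) (_ : G ⊆ H), W G)
        ∩ (⋂ (G : Finset (Fin n)) (_ : F ⊆ G) (_ : G ⊆ H.erase i), W G) := by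
  ext v
  simp only [Set.mem_inter_iff, Set.mem_iInter]
  constructor
  · intro h
    refine ⟨fun G h1 h2 => h G ((Finset.subset_insert i F).trans h1) h2,
            fun G h1 h2 => h G h1 (h2.trans (Finset.erase_subset i H))⟩
  · rintro ⟨h1, h2⟩ G hFG hGH
    by_cases hi : i ∈ G
    · exact h1 G (Finset.insert_subset hi hFG) hGH
    · exact h2 G hFG (fun x hx => Finset.mem_erase.mpr ⟨fun e => hi (e ▸ hx), hGH hx⟩)

lemma main_aux (W : Finset (Fin n) → Set Γ.Obj)
    (hW : ∀ (G : Finset (Fin n)) (i : Fin n), i ∉ G →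
      W G = Γ.pre (RankGraph.chi {i}) (W G ∩ W (insert i G)))
    (k : ℕ) :
    ∀ (F H : Finset (Fin n)), F ⊆ H → (H \ F).card = k →
      Γ.pre (RankGraph.chi H - RankGraph.chi F)
        (⋂ (G : Finset (Fin n)) (_ : F ⊆ G) (_ : G ⊆ H), W G) = W F := by
  induction k with
  | zero =>
    intro F H hFH hcard
    have hHF : H = F := by
      have h0 : H \ F = ∅ := Finset.card_eq_zero.mp hcard
      exact Finset.Subset.antisymm
        (fun x hx => by
          by_contra hxF
          exact absurd (Finset.mem_sdiff.mpr ⟨hx, hxF⟩) (by simp [h0])) hFH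
    subst hHF
    rw [chi_sub_self, pre_zero]
    apply Set.Subset.antisymm
    · intro v hv
      simp only [Set.mem_iInter] at hv
      exact hv H Finset.Subset.rfl Finset.Subset.rfl
    · intro v hv
      simp only [Set.mem_iInter]
      intro G h1 h2
      obtain rfl := Finset.Subset.antisymm h2 h1
      exact hv
  | succ k ih =>
    intro F H hFH hcard
    obtain ⟨i, hi⟩ : (H \ F).Nonempty := by
      rw [← Finset.card_pos, hcard]; omega
    have hiH : i ∈ H := (Finset.mem_sdiff.mp hi).1
    have hiF : i ∉ F := (Finset.mem_sdiff.mp hi).2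
    have hF'H : insert i F ⊆ H := Finset.insert_subset hiH hFH
    have hcard1 : (H \ insert i F).card = k := by
      have he : H \ insert i F = (H \ F).erase i := by
        ext x
        simp only [Finset.mem_sdiff, Finset.mem_erase, Finset.mem_insert]
        tauto
      rw [he, Finset.card_erase_of_mem hi, hcard]; omega
    have hFH2 : F ⊆ H.erase i :=
      fun x hx => Finset.mem_erase.mpr ⟨fun e => hiF (e ▸ hx), hFH hx⟩
    have hcard2 : (H.erase i \ F).card = k := by
      have he : H.erase i \ F = (H \ F).erase i := by
        ext x
        simp only [Finset.mem_sdiff, Finset.mem_erase]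
        tauto
      rw [he, Finset.card_erase_of_mem hi, hcard]; omega
    rw [chi_sub_eq F H i hiH hiF, pre_add, iInter_split Γ W F H i hiH hiF, pre_inter,
      ih (insert i F) H hF'H hcard1, chi_sub_insert_eq_erase F H i hiF hiH,
      ih F (H.erase i) hFH2 hcard2, Set.inter_comm, ← hW F i hiF]

end RankGraph

/-- For an invariant family `W` of vertex subsets and `F ⊆ H ⊆ [n]`:
`(Γ^{1_H − 1_F})⁻¹(⋂_{G : F ⊆ G ⊆ H} W^G) = W^F`. -/
theorem rankGraph_invFamily_pre_iInter {n : ℕ} (Γ : RankGraph n)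
    (W : Finset (Fin n) → Set Γ.Obj)
    (hW : ∀ (G : Finset (Fin n)) (i : Fin n), i ∉ G →
      W G = Γ.pre (RankGraph.chi {i}) (W G ∩ W (insert i G)))
    (F H : Finset (Fin n)) (hFH : F ⊆ H) :
    Γ.pre (RankGraph.chi H - RankGraph.chi F)
        (⋂ (G : Finset (Fin n)) (_ : F ⊆ G) (_ : G ⊆ H), W G) = W F := by
  exact Γ.main_aux W hW (H \ F).card F H hFH rfl
end

section
/- Let Λ be a graph of rank n, let W = {W^G}_{G⊆[n]} be an invariant family of vertex subsets, let F ⊆ [n], and let i ∈ [n]∖F. Then (Λ^{1_i})⁻¹( ⋂_{G⊇F} W^G ) = ⋂_{G⊇F, i∉G} W^G. (Higher-rank graph instance of the key computation in the proof of Proposition 4.1 of the paper.) -/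
open CategoryTheory

/-- For an invariant family `W` of vertex subsets, `F ⊆ [n]` and `i ∈ [n] ∖ F`:
`(Γ^{1_i})⁻¹(⋂_{G ⊇ F} W^G) = ⋂_{G ⊇ F, i ∉ G} W^G`. -/
theorem rankGraph_invFamily_pre_single {n : ℕ} (Γ : RankGraph n)
    (W : Finset (Fin n) → Set Γ.Obj)
    (hW : ∀ (G : Finset (Fin n)) (i : Fin n), i ∉ G →
      W G = Γ.pre (RankGraph.chi {i}) (W G ∩ W (insert i G)))
    (F : Finset (Fin n)) (i : Fin n) (hi : i ∉ F) :
    Γ.pre (RankGraph.chi {i}) (⋂ (G : Finset (Fin n)) (_ : F ⊆ G), W G) =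
      ⋂ (G : Finset (Fin n)) (_ : F ⊆ G) (_ : i ∉ G), W G := by
  ext v
  simp only [Set.mem_iInter]
  constructor
  · intro hv G hFG hiG
    rw [hW G i hiG]
    intro u γ hγ
    have hu := hv u γ hγ
    simp only [Set.mem_iInter] at hu
    exact ⟨hu G hFG, hu (insert i G) (hFG.trans (Finset.subset_insert i G))⟩
  · intro hv u γ hγ
    simp only [Set.mem_iInter]
    intro G hFG
    by_cases hiG : i ∈ G
    · have hF' : F ⊆ G.erase i := Finset.subset_erase.2 ⟨hFG, hi⟩
      have hiG' : i ∉ G.erase i := Finset.notMem_erase i G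
      have hv' := hv (G.erase i) hF' hiG'
      rw [hW (G.erase i) i hiG'] at hv'
      have := (hv' u γ hγ).2
      rwa [Finset.insert_erase hiG] at this
    · have hv' := hv G hFG hiG
      rw [hW G i hiG] at hv'
      exact (hv' u γ hγ).1
end

section
/- Let Λ be a graph of rank n and let V = {V^F}_{F⊆[n]} be a T-family of vertex subsets. Define W_V^F := (Λ^{1 − 1_F})⁻¹(V^F) for each F ⊆ [n], where 1 = 1_{[n]}. Then W_V = {W_V^F}_{F⊆[n]} is an invariant family of vertex subsets, i.e., W_V^G = (Λ^{1_i})⁻¹(W_V^G ∩ W_V^{G∪{i}}) for all G ⊆ [n] and i ∈ [n]∖G. (Higher-rank graph instance of one half of Proposition 4.1 of the paper.) -/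
open CategoryTheory

-- aux

lemma RankGraph.pre_add_s6 {n : ℕ} (Γ : RankGraph n) (m k : Fin n → ℕ) (S : Set Γ.Obj) :
    Γ.pre (m + k) S = Γ.pre m (Γ.pre k S) := by
  ext v
  constructor
  · intro h w α hα u β hβ
    exact h u (β ≫ α) (by rw [Γ.d_comp, hβ, hα, add_comm])
  · intro h u γ hγ
    obtain ⟨⟨mid, β, α⟩, ⟨hα, hβ, hcomp⟩, -⟩ := Γ.factor γ m k hγ
    exact h mid α hα u β hβ

lemma RankGraph.pre_inter_s6 {n : ℕ} (Γ : RankGraph n) (m : Fin n → ℕ) (S T : Set Γ.Obj) :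
    Γ.pre m (S ∩ T) = Γ.pre m S ∩ Γ.pre m T := by
  ext v
  simp only [RankGraph.pre, Set.mem_setOf_eq, Set.mem_inter_iff]
  constructor
  · exact fun h => ⟨fun u γ hγ => (h u γ hγ).1, fun u γ hγ => (h u γ hγ).2⟩
  · exact fun h u γ hγ => ⟨h.1 u γ hγ, h.2 u γ hγ⟩


/-- If `V` is a T-family of vertex subsets, then `W_V`, defined by
`W_V^F = (Γ^{1 − 1_F})⁻¹(V^F)` with `1 = 1_{[n]}`, is an invariant family. -/
theorem rankGraph_TFamily_toInvariant {n : ℕ} (Γ : RankGraph n)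
    (V : Finset (Fin n) → Set Γ.Obj)
    (hV : ∀ (F : Finset (Fin n)) (i : Fin n), i ∉ F →
      Γ.pre (RankGraph.chi {i}) (V F) ∩ V (insert i F) = V F)
    (W : Finset (Fin n) → Set Γ.Obj)
    (hWdef : ∀ F : Finset (Fin n),
      W F = Γ.pre (RankGraph.chi Finset.univ - RankGraph.chi F) (V F)) :
    ∀ (G : Finset (Fin n)) (i : Fin n), i ∉ G →
      W G = Γ.pre (RankGraph.chi {i}) (W G ∩ W (insert i G)) := by
  intro G i hi
  set k : Fin n → ℕ := RankGraph.chi Finset.univ - RankGraph.chi (insert i G) with hk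
  have harith : RankGraph.chi Finset.univ - RankGraph.chi G = RankGraph.chi {i} + k := by
    funext j
    simp only [hk, RankGraph.chi, Pi.sub_apply, Pi.add_apply, Finset.mem_univ, if_true,
      Finset.mem_singleton, Finset.mem_insert]
    by_cases hji : j = i
    · subst hji
      simp [hi]
    · by_cases hjG : j ∈ G <;> simp [hji, hjG]
  have h2 : Γ.pre k (V G) = W G ∩ W (insert i G) := by
    conv_lhs => rw [← hV G i hi]
    rw [Γ.pre_inter_s6, ← Γ.pre_add_s6, hWdef G, hWdef (insert i G), harith, add_comm]
  conv_lhs => rw [hWdef G, harith, Γ.pre_add_s6, h2]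
end

section
/- Let Λ be a graph of rank n and let W = {W^G}_{G⊆[n]} be an invariant family of vertex subsets. Define V_W^F := ⋂_{G⊇F} W^G for each F ⊆ [n]. Then V_W = {V_W^F}_{F⊆[n]} is a T-family of vertex subsets, i.e., (Λ^{1_i})⁻¹(V_W^F) ∩ V_W^{F∪{i}} = V_W^F for all F ⊆ [n] and i ∈ [n]∖F. (Higher-rank graph instance of one half of Proposition 4.1 of the paper.) -/
open CategoryTheory

/-- If `W` is an invariant family of vertex subsets, then `V_W`, defined by
`V_W^F = ⋂_{G ⊇ F} W^G`, is a T-family. -/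
theorem rankGraph_invFamily_toT {n : ℕ} (Γ : RankGraph n)
    (W : Finset (Fin n) → Set Γ.Obj)
    (hW : ∀ (G : Finset (Fin n)) (i : Fin n), i ∉ G →
      W G = Γ.pre (RankGraph.chi {i}) (W G ∩ W (insert i G)))
    (V : Finset (Fin n) → Set Γ.Obj)
    (hVdef : ∀ F : Finset (Fin n), V F = ⋂ (G : Finset (Fin n)) (_ : F ⊆ G), W G) :
    ∀ (F : Finset (Fin n)) (i : Fin n), i ∉ F →
      Γ.pre (RankGraph.chi {i}) (V F) ∩ V (insert i F) = V F := by
  intro F i hi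
  ext v
  simp only [Set.mem_inter_iff, RankGraph.pre, Set.mem_setOf_eq, hVdef, Set.mem_iInter]
  constructor
  · rintro ⟨hpre, hins⟩ G hFG
    by_cases hiG : i ∈ G
    · exact hins G (Finset.insert_subset hiG hFG)
    · rw [hW G i hiG]
      intro u γ hγ
      have hu := hpre u γ hγ
      exact ⟨hu G hFG, hu (insert i G) (hFG.trans (Finset.subset_insert i G))⟩
  · intro hv
    refine ⟨?_, fun G hG => hv G ((Finset.subset_insert i F).trans hG)⟩
    intro u γ hγ G hFG
    set G' := G.erase i with hG'
    have hiG' : i ∉ G' := Finset.notMem_erase i G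
    have hFG' : F ⊆ G' := fun x hx =>
      Finset.mem_erase.mpr ⟨fun h => hi (h ▸ hx), hFG hx⟩
    have hvG' : v ∈ W G' := hv G' hFG'
    rw [hW G' i hiG'] at hvG'
    have hu := hvG' u γ hγ
    by_cases hiG : i ∈ G
    · have heq : insert i G' = G := Finset.insert_erase hiG
      exact heq ▸ hu.2
    · have heq : G' = G := by rw [hG', Finset.erase_eq_of_notMem hiG]
      exact heq ▸ hu.1
end

section
/- Let Λ be a graph of rank n. The maps V ↦ W_V, where W_V^F = (Λ^{1 − 1_F})⁻¹(V^F), and W ↦ V_W, where V_W^F = ⋂_{G⊇F} W^G, are mutually inverse, inclusion-preserving bijections between the set of T-families of vertex subsets of Λ and the set of invariant families of vertex subsets of Λ. In particular, V_{W_V} = V for every T-family V, W_{V_W} = W for every invariant family W, and V ⪯ V′ holds if and only if W_V ⪯ W_{V′} (where ⪯ means componentwise inclusion). (The higher-rank graph version of Proposition 4.1, as asserted in Section 5 of the paper.) -/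
open CategoryTheory

namespace RankGraph

variable {n : ℕ}

/-- `V` is a T-family of vertex subsets. -/
def IsTFamily (Γ : RankGraph n) (V : Finset (Fin n) → Set Γ.Obj) : Prop :=
  ∀ (F : Finset (Fin n)) (i : Fin n), i ∉ F →
    Γ.pre (chi {i}) (V F) ∩ V (insert i F) = V F

/-- `W` is an invariant family of vertex subsets. -/
def IsInvFamily (Γ : RankGraph n) (W : Finset (Fin n) → Set Γ.Obj) : Prop :=
  ∀ (G : Finset (Fin n)) (i : Fin n), i ∉ G →
    W G = Γ.pre (chi {i}) (W G ∩ W (insert i G))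

/-- the map `V ↦ W_V`, `W_V^F = (Γ^{1 − 1_F})⁻¹(V^F)` where `1 = 1_{[n]}` -/
def toInv (Γ : RankGraph n) (V : Finset (Fin n) → Set Γ.Obj) :
    Finset (Fin n) → Set Γ.Obj :=
  fun F => Γ.pre (chi Finset.univ - chi F) (V F)

/-- the map `W ↦ V_W`, `V_W^F = ⋂_{G ⊇ F} W^G` -/
def toT (Γ : RankGraph n) (W : Finset (Fin n) → Set Γ.Obj) :
    Finset (Fin n) → Set Γ.Obj :=
  fun F => ⋂ (G : Finset (Fin n)) (_ : F ⊆ G), W G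

end RankGraph

namespace RankGraph

variable {n : ℕ} (Γ : RankGraph n)

lemma mem_pre {m : Fin n → ℕ} {S : Set Γ.Obj} {v : Γ.Obj} :
    v ∈ Γ.pre m S ↔ ∀ (u : Γ.Obj) (γ : u ⟶ v), Γ.d γ = m → u ∈ S := Iff.rfl

lemma pre_mono {S T : Set Γ.Obj} (h : S ⊆ T) (m : Fin n → ℕ) :
    Γ.pre m S ⊆ Γ.pre m T := fun v hv u γ hγ => h (hv u γ hγ)

lemma pre_comm (m k : Fin n → ℕ) (S : Set Γ.Obj) :
    Γ.pre m (Γ.pre k S) = Γ.pre k (Γ.pre m S) := by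
  rw [← pre_add, add_comm, pre_add]

lemma chi_empty : chi (∅ : Finset (Fin n)) = 0 := by
  funext j; simp [chi]

lemma chi_union_disjoint {A B : Finset (Fin n)} (h : Disjoint A B) :
    chi (A ∪ B) = chi A + chi B := by
  funext j
  simp only [chi, Finset.mem_union, Pi.add_apply]
  by_cases hA : j ∈ A
  · have hB : j ∉ B := Finset.disjoint_left.mp h hA
    simp [hA, hB]
  · by_cases hB : j ∈ B <;> simp [hA, hB]

lemma chi_insert {i : Fin n} {H : Finset (Fin n)} (h : i ∉ H) :
    chi (insert i H) = chi {i} + chi H := by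
  rw [Finset.insert_eq, chi_union_disjoint (by simpa using h)]

lemma chi_sub_compl (F : Finset (Fin n)) : chi Finset.univ - chi F = chi Fᶜ := by
  funext j
  simp only [chi, Pi.sub_apply, Finset.mem_univ, if_true, Finset.mem_compl]
  by_cases hF : j ∈ F <;> simp [hF]

lemma compl_eq_insert {i : Fin n} {G : Finset (Fin n)} (hi : i ∉ G) :
    Gᶜ = insert i (insert i G)ᶜ := by
  ext j
  simp only [Finset.mem_compl, Finset.mem_insert]
  constructor
  · intro hj
    by_cases hji : j = i
    · exact Or.inl hji
    · exact Or.inr (by simp [hji, hj])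
  · rintro (rfl | hj)
    · exact hi
    · intro hjG
      exact hj (Or.inr hjG)

lemma chi_compl_insert {i : Fin n} {G : Finset (Fin n)} (hi : i ∉ G) :
    chi Gᶜ = chi {i} + chi (insert i G)ᶜ := by
  rw [compl_eq_insert hi, chi_insert (by simp)]



variable {Γ} {V W : Finset (Fin n) → Set Γ.Obj}

lemma tfam_subset (hV : Γ.IsTFamily V) {F : Finset (Fin n)} {i : Fin n} (hi : i ∉ F) :
    V F ⊆ V (insert i F) := by
  conv_lhs => rw [← hV F i hi]
  exact Set.inter_subset_right

lemma tfam_pre (hV : Γ.IsTFamily V) {F : Finset (Fin n)} {i : Fin n} (hi : i ∉ F) :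
    V F ⊆ Γ.pre (chi {i}) (V F) := by
  conv_lhs => rw [← hV F i hi]
  exact Set.inter_subset_left

lemma sdiff_insert' (G F : Finset (Fin n)) (i : Fin n) :
    G \ insert i F = (G \ F).erase i := by
  ext j; simp only [Finset.mem_sdiff, Finset.mem_insert, Finset.mem_erase]; tauto

lemma tfam_mono (hV : Γ.IsTFamily V) {F G : Finset (Fin n)} (hFG : F ⊆ G) :
    V F ⊆ V G := by
  obtain ⟨N, hN⟩ : ∃ N, (G \ F).card ≤ N := ⟨_, le_refl _⟩
  induction N generalizing F with
  | zero =>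
    have : G \ F = ∅ := Finset.card_eq_zero.mp (Nat.le_zero.mp hN)
    have : G ⊆ F := by
      intro j hj
      by_contra hjF
      exact absurd (Finset.mem_sdiff.mpr ⟨hj, hjF⟩) (by simp [this])
    rw [Finset.Subset.antisymm hFG this]
  | succ N ih =>
    by_cases hGF : G ⊆ F
    · rw [Finset.Subset.antisymm hFG hGF]
    · obtain ⟨i, hiG, hiF⟩ := Finset.not_subset.mp hGF
      have h1 : V F ⊆ V (insert i F) := tfam_subset hV hiF
      have h2 : V (insert i F) ⊆ V G := by
        apply ih (Finset.insert_subset hiG hFG)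
        rw [sdiff_insert']
        have : i ∈ G \ F := Finset.mem_sdiff.mpr ⟨hiG, hiF⟩
        rw [Finset.card_erase_of_mem this]
        omega
      exact h1.trans h2

lemma tfam_preH (hV : Γ.IsTFamily V) {F H : Finset (Fin n)} (hd : Disjoint F H) :
    V F ⊆ Γ.pre (chi H) (V F) := by
  induction H using Finset.induction_on with
  | empty => rw [chi_empty, pre_zero]
  | @insert i H' hiH' ih =>
    have hd' : Disjoint F H' := hd.mono_right (Finset.subset_insert i H')
    have hiF : i ∉ F := fun h => (Finset.disjoint_left.mp hd h) (Finset.mem_insert_self i H')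
    rw [chi_insert hiH', add_comm, pre_add]
    calc V F ⊆ Γ.pre (chi H') (V F) := ih hd'
      _ ⊆ Γ.pre (chi H') (Γ.pre (chi {i}) (V F)) := Γ.pre_mono (tfam_pre hV hiF) _

lemma erase_sdiff' (K G : Finset (Fin n)) (i : Fin n) :
    K.erase i \ G = (K \ G).erase i := by
  ext j; simp only [Finset.mem_sdiff, Finset.mem_erase]; tauto

lemma sdiff_eq_insert {K G : Finset (Fin n)} {i : Fin n} (hiK : i ∈ K) (hiG : i ∉ G) :
    K \ G = insert i (K.erase i \ G) := by
  ext j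
  simp only [Finset.mem_sdiff, Finset.mem_insert, Finset.mem_erase]
  constructor
  · rintro ⟨hjK, hjG⟩
    by_cases hji : j = i
    · exact Or.inl hji
    · exact Or.inr ⟨⟨hji, hjK⟩, hjG⟩
  · rintro (rfl | ⟨⟨-, hjK⟩, hjG⟩)
    · exact ⟨hiK, hiG⟩
    · exact ⟨hjK, hjG⟩

lemma claimFK (hV : Γ.IsTFamily V) (N : ℕ) :
    ∀ (F K : Finset (Fin n)) (v : Γ.Obj), F ⊆ K → (K \ F).card ≤ N →
      (∀ G, F ⊆ G → G ⊆ K → v ∈ Γ.pre (chi (K \ G)) (V G)) → v ∈ V F := by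
  induction N with
  | zero =>
    intro F K v hFK hcard h
    have hempty : K \ F = ∅ := Finset.card_eq_zero.mp (Nat.le_zero.mp hcard)
    have := h F subset_rfl hFK
    rw [hempty, chi_empty, pre_zero] at this
    exact this
  | succ N ih =>
    intro F K v hFK hcard h
    by_cases hKF : K ⊆ F
    · have hempty : K \ F = ∅ := by
        rw [Finset.sdiff_eq_empty_iff_subset]; exact hKF
      have := h F subset_rfl hFK
      rw [hempty, chi_empty, pre_zero] at this
      exact this
    · obtain ⟨i, hiK, hiF⟩ := Finset.not_subset.mp hKF
      have hmem : i ∈ K \ F := Finset.mem_sdiff.mpr ⟨hiK, hiF⟩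
      have hvF' : v ∈ V (insert i F) := by
        apply ih (insert i F) K v (Finset.insert_subset hiK hFK)
        · rw [sdiff_insert', Finset.card_erase_of_mem hmem]; omega
        · intro G hG1 hG2
          exact h G ((Finset.subset_insert i F).trans hG1) hG2
      have hpre : v ∈ Γ.pre (chi {i}) (V F) := by
        intro u γ hγ
        apply ih F (K.erase i) u
        · intro j hj
          exact Finset.mem_erase.mpr ⟨fun hji => hiF (hji ▸ hj), hFK hj⟩
        · rw [erase_sdiff', Finset.card_erase_of_mem hmem]; omega
        · intro G hG1 hG2
          have hiG : i ∉ G := fun hiG' => (Finset.mem_erase.mp (hG2 hiG')).1 rfl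
          have hvG := h G hG1 (hG2.trans (Finset.erase_subset i K))
          have hnotmem : i ∉ K.erase i \ G := fun hc =>
            (Finset.mem_erase.mp (Finset.mem_sdiff.mp hc).1).1 rfl
          rw [sdiff_eq_insert hiK hiG, chi_insert hnotmem, pre_add] at hvG
          exact hvG u γ hγ
      rw [← hV F i hiF]
      exact ⟨hpre, hvF'⟩

lemma claimWH (hW : Γ.IsInvFamily W) (H : Finset (Fin n)) :
    ∀ (F : Finset (Fin n)), Disjoint F H →
      W F = Γ.pre (chi H)
        (⋂ (G : Finset (Fin n)) (_ : F ⊆ G) (_ : G ⊆ F ∪ H), W G) := by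
  induction H using Finset.induction_on with
  | empty =>
    intro F _
    rw [chi_empty, pre_zero]
    apply Set.Subset.antisymm
    · intro v hv
      simp only [Set.mem_iInter]
      intro G hFG hGF
      rw [Finset.union_empty] at hGF
      rwa [Finset.Subset.antisymm hFG hGF] at hv
    · intro v hv
      simp only [Set.mem_iInter] at hv
      exact hv F subset_rfl (by simp)
  | @insert i H' hiH' ih =>
    intro F hd
    have hd' : Disjoint F H' := hd.mono_right (Finset.subset_insert i H')
    have hiF : i ∉ F := fun h => (Finset.disjoint_left.mp hd h) (Finset.mem_insert_self i H')
    have hd'' : Disjoint (insert i F) H' := by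
      rw [Finset.disjoint_left]
      intro j hj hjH'
      rcases Finset.mem_insert.mp hj with rfl | hjF
      · exact hiH' hjH'
      · exact (Finset.disjoint_left.mp hd' hjF) hjH'
    set A := ⋂ (G : Finset (Fin n)) (_ : F ⊆ G) (_ : G ⊆ F ∪ H'), W G with hA
    set B := ⋂ (G : Finset (Fin n)) (_ : insert i F ⊆ G) (_ : G ⊆ insert i F ∪ H'), W G with hB
    have hAB : A ∩ B =
        ⋂ (G : Finset (Fin n)) (_ : F ⊆ G) (_ : G ⊆ F ∪ insert i H'), W G := by
      have hun : F ∪ insert i H' = insert i F ∪ H' := by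
        rw [Finset.union_insert, Finset.insert_union]
      ext v
      simp only [hA, hB, Set.mem_inter_iff, Set.mem_iInter]
      constructor
      · rintro ⟨h1, h2⟩ G hFG hGsub
        by_cases hiG : i ∈ G
        · exact h2 G (Finset.insert_subset hiG hFG) (hun ▸ hGsub)
        · apply h1 G hFG
          intro j hj
          rcases Finset.mem_union.mp (hGsub hj) with hjF | hjH
          · exact Finset.mem_union_left _ hjF
          · rcases Finset.mem_insert.mp hjH with rfl | hjH'
            · exact absurd hj hiG
            · exact Finset.mem_union_right _ hjH'
      · intro h
        constructor
        · intro G hFG hGsub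
          exact h G hFG (hGsub.trans (Finset.union_subset_union_right
            (Finset.subset_insert i H')))
        · intro G hFG hGsub
          exact h G ((Finset.subset_insert i F).trans hFG) (hun ▸ hGsub)
    calc W F = Γ.pre (chi {i}) (W F ∩ W (insert i F)) := hW F i hiF
      _ = Γ.pre (chi {i}) (Γ.pre (chi H') A ∩ Γ.pre (chi H') B) := by
          rw [← ih F hd', ← ih (insert i F) hd'']
      _ = Γ.pre (chi {i}) (Γ.pre (chi H') (A ∩ B)) := by rw [← Γ.pre_inter (chi H') A B]
      _ = Γ.pre (chi (insert i H')) (A ∩ B) := by rw [chi_insert hiH', pre_add]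
      _ = _ := by rw [hAB]

end RankGraph


open RankGraph in
/-- `V ↦ W_V` and `W ↦ V_W` are mutually inverse, inclusion-preserving bijections
between T-families and invariant families of vertex subsets of a rank-`n` graph. -/
theorem rankGraph_TFamily_invFamily_bijection {n : ℕ} (Γ : RankGraph n) :
    (∀ V : Finset (Fin n) → Set Γ.Obj,
        Γ.IsTFamily V → Γ.IsInvFamily (Γ.toInv V)) ∧
    (∀ W : Finset (Fin n) → Set Γ.Obj,
        Γ.IsInvFamily W → Γ.IsTFamily (Γ.toT W)) ∧
    (∀ V : Finset (Fin n) → Set Γ.Obj,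
        Γ.IsTFamily V → Γ.toT (Γ.toInv V) = V) ∧
    (∀ W : Finset (Fin n) → Set Γ.Obj,
        Γ.IsInvFamily W → Γ.toInv (Γ.toT W) = W) ∧
    (∀ V V' : Finset (Fin n) → Set Γ.Obj, Γ.IsTFamily V → Γ.IsTFamily V' →
        ((∀ F, V F ⊆ V' F) ↔ ∀ F, Γ.toInv V F ⊆ Γ.toInv V' F)) := by
  have part1 : ∀ V : Finset (Fin n) → Set Γ.Obj,
      Γ.IsTFamily V → Γ.IsInvFamily (Γ.toInv V) := by
    intro V hV G i hi
    have hc : chi Finset.univ - chi G = chi {i} + chi (insert i G)ᶜ := by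
      rw [chi_sub_compl, chi_compl_insert hi]
    have hc' : chi Finset.univ - chi (insert i G) = chi (insert i G)ᶜ :=
      chi_sub_compl _
    show Γ.pre (chi Finset.univ - chi G) (V G)
        = Γ.pre (chi {i}) (Γ.pre (chi Finset.univ - chi G) (V G) ∩
            Γ.pre (chi Finset.univ - chi (insert i G)) (V (insert i G)))
    rw [hc, hc', pre_add]
    have key : Γ.pre (chi {i}) (Γ.pre (chi (insert i G)ᶜ) (V G)) ∩
        Γ.pre (chi (insert i G)ᶜ) (V (insert i G))
        = Γ.pre (chi (insert i G)ᶜ) (V G) := by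
      rw [Γ.pre_comm (chi {i}) (chi (insert i G)ᶜ) (V G),
        ← Γ.pre_inter (chi (insert i G)ᶜ), hV G i hi]
    rw [key]
  have part2 : ∀ W : Finset (Fin n) → Set Γ.Obj,
      Γ.IsInvFamily W → Γ.IsTFamily (Γ.toT W) := by
    intro W hW F i hi
    ext v
    simp only [toT, Set.mem_inter_iff, Set.mem_iInter]
    constructor
    · rintro ⟨h1, h2⟩ G hFG
      by_cases hiG : i ∈ G
      · exact h2 G (Finset.insert_subset hiG hFG)
      · rw [hW G i hiG]
        intro u γ hγ
        have hu := h1 u γ hγ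
        simp only [toT, Set.mem_iInter] at hu
        exact ⟨hu G hFG, hu (insert i G) (hFG.trans (Finset.subset_insert i G))⟩
    · intro h
      refine ⟨?_, fun G hG => h G ((Finset.subset_insert i F).trans hG)⟩
      intro u γ hγ
      simp only [toT, Set.mem_iInter]
      intro G hFG
      by_cases hiG : i ∈ G
      · have hGe : i ∉ G.erase i := Finset.notMem_erase i G
        have hFGe : F ⊆ G.erase i := fun j hj =>
          Finset.mem_erase.mpr ⟨fun e => hi (e ▸ hj), hFG hj⟩
        have hv := h (G.erase i) hFGe
        rw [hW (G.erase i) i hGe] at hv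
        have := (hv u γ hγ).2
        rwa [Finset.insert_erase hiG] at this
      · have hv := h G hFG
        rw [hW G i hiG] at hv
        exact (hv u γ hγ).1
  have part3 : ∀ V : Finset (Fin n) → Set Γ.Obj,
      Γ.IsTFamily V → Γ.toT (Γ.toInv V) = V := by
    intro V hV
    funext F
    apply Set.Subset.antisymm
    · intro v hv
      simp only [toT, toInv, Set.mem_iInter] at hv
      apply claimFK hV (Finset.univ \ F).card F Finset.univ v (Finset.subset_univ F) le_rfl
      intro G hFG _
      have hvG := hv G hFG
      rw [chi_sub_compl] at hvG
      rwa [show Finset.univ \ G = Gᶜ from (Finset.compl_eq_univ_sdiff G).symm]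
    · intro v hv
      simp only [toT, toInv, Set.mem_iInter]
      intro G hFG
      rw [chi_sub_compl]
      exact tfam_preH hV disjoint_compl_right (tfam_mono hV hFG hv)
  have part4 : ∀ W : Finset (Fin n) → Set Γ.Obj,
      Γ.IsInvFamily W → Γ.toInv (Γ.toT W) = W := by
    intro W hW
    funext F
    have h := claimWH hW Fᶜ F disjoint_compl_right
    have hiI : (⋂ (G : Finset (Fin n)) (_ : F ⊆ G) (_ : G ⊆ F ∪ Fᶜ), W G)
        = ⋂ (G : Finset (Fin n)) (_ : F ⊆ G), W G := by
      ext v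
      simp only [Set.mem_iInter]
      constructor
      · intro hh G hFG
        refine hh G hFG (fun j _ => Finset.mem_union.mpr ?_)
        by_cases hj : j ∈ F
        · exact Or.inl hj
        · exact Or.inr (Finset.mem_compl.mpr hj)
      · intro hh G hFG _
        exact hh G hFG
    rw [hiI] at h
    show Γ.pre (chi Finset.univ - chi F) (Γ.toT W F) = W F
    rw [chi_sub_compl]
    exact h.symm
  refine ⟨part1, part2, part3, part4, ?_⟩
  intro V V' hV hV'
  constructor
  · intro h F
    exact Γ.pre_mono (h F) _
  · intro h F
    rw [← part3 V hV, ← part3 V' hV']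
    intro v hv
    simp only [toT, Set.mem_iInter] at hv ⊢
    intro G hFG
    exact h G (hv G hFG)
end
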